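/- arXiv:0710.4424 — 3 statements merged into one kernel-verified Lean document; each statement's English description precedes it below -/
import Mathlib

section
/- Let M be a matroid on [n] and B, B' two distinct bases of M. Then the segment [e_B, e_{B'}] is an edge of the matroid polytope Q(M) if and only if |B \ B'| = 1, i.e., B' = (B \ {i}) ∪ {j} for some i, j. -/
open Finset
open scoped Pointwise

/-- The indicator vector `e_B ∈ ℝⁿ` of a subset `B ⊆ [n]`. -/
def indVec (n : ℕ) (B : Finset (Fin n)) : Fin n → ℝ := fun i => if i ∈ B then 1 else 0

/-- A collection of subsets of `[n]` is the collection of bases of a matroid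
(possibly the empty matroid) iff it satisfies the basis exchange axiom. -/
def IsBases {n : ℕ} (𝓑 : Finset (Finset (Fin n))) : Prop :=
  ∀ B₁ ∈ 𝓑, ∀ B₂ ∈ 𝓑, ∀ b₁ ∈ B₁ \ B₂, ∃ b₂ ∈ B₂ \ B₁, insert b₂ (B₁.erase b₁) ∈ 𝓑

/-- The matroid (basis) polytope: convex hull of indicator vectors of the bases. -/
def polytope {n : ℕ} (𝓑 : Finset (Finset (Fin n))) : Set (Fin n → ℝ) :=
  convexHull ℝ (indVec n '' ↑𝓑)

/-- The (affine) dimension of a subset of ℝⁿ. -/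
noncomputable def polyDim {n : ℕ} (F : Set (Fin n → ℝ)) : ℕ :=
  Module.finrank ℝ (affineSpan ℝ F).direction

/-- An edge of a polytope `P` is a one-dimensional (exposed) face. -/
def IsEdge {n : ℕ} (P F : Set (Fin n → ℝ)) : Prop :=
  IsExposed ℝ P F ∧ polyDim F = 1

/-! ### Auxiliary lemmas -/

lemma indVec_inj {n : ℕ} {C D : Finset (Fin n)} (h : indVec n C = indVec n D) : C = D := by
  ext k
  have hk := congrFun h k
  simp only [indVec] at hk
  constructor <;> intro hm
  · by_contra hD
    rw [if_pos hm, if_neg hD] at hk; norm_num at hk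
  · by_contra hC
    rw [if_neg hC, if_pos hm] at hk; norm_num at hk

lemma bases_card_eq_aux {n : ℕ} {𝓑 : Finset (Finset (Fin n))} (hM : IsBases 𝓑) :
    ∀ k (B₁ : Finset (Fin n)), B₁ ∈ 𝓑 → ∀ B₂ ∈ 𝓑, (B₁ \ B₂).card = k →
      B₁.card = B₂.card := by
  intro k
  induction k using Nat.strong_induction_on with
  | _ k ih =>
  intro B₁ hB₁ B₂ hB₂ hk
  rcases Nat.eq_zero_or_pos k with rfl | hpos
  · have h1 : B₁ ⊆ B₂ := by
      rw [Finset.card_eq_zero, Finset.sdiff_eq_empty_iff_subset] at hk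
      exact hk
    have h2 : B₂ ⊆ B₁ := by
      rw [← Finset.sdiff_eq_empty_iff_subset]
      by_contra h
      obtain ⟨b, hb⟩ := Finset.nonempty_iff_ne_empty.mpr h
      obtain ⟨b', hb', -⟩ := hM B₂ hB₂ B₁ hB₁ b hb
      rw [Finset.card_eq_zero] at hk
      rw [hk] at hb'
      exact absurd hb' (Finset.notMem_empty _)
    exact le_antisymm (Finset.card_le_card h1) (Finset.card_le_card h2)
  · obtain ⟨b₁, hb₁⟩ : (B₁ \ B₂).Nonempty := by
      rw [← Finset.card_pos, hk]; exact hpos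
    obtain ⟨b₂, hb₂, hC⟩ := hM B₁ hB₁ B₂ hB₂ b₁ hb₁
    have hb₁B : b₁ ∈ B₁ := (Finset.mem_sdiff.mp hb₁).1
    have hb₂B₂ : b₂ ∈ B₂ := (Finset.mem_sdiff.mp hb₂).1
    have hb₂B₁ : b₂ ∉ B₁ := (Finset.mem_sdiff.mp hb₂).2
    have hcardC : (insert b₂ (B₁.erase b₁)).card = B₁.card := by
      rw [Finset.card_insert_of_notMem (fun h => hb₂B₁ (Finset.mem_of_mem_erase h)),
        Finset.card_erase_of_mem hb₁B]
      exact Nat.succ_pred_eq_of_pos (Finset.card_pos.mpr ⟨b₁, hb₁B⟩)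
    have hCd : ((insert b₂ (B₁.erase b₁)) \ B₂).card = k - 1 := by
      rw [Finset.insert_sdiff_of_mem _ hb₂B₂, Finset.erase_sdiff_comm,
        Finset.card_erase_of_mem hb₁, hk]
    have := ih (k - 1) (Nat.sub_lt hpos one_pos) _ hC B₂ hB₂ hCd
    omega

lemma bases_card_eq {n : ℕ} {𝓑 : Finset (Finset (Fin n))} (hM : IsBases 𝓑)
    {B₁ B₂ : Finset (Fin n)} (hB₁ : B₁ ∈ 𝓑) (hB₂ : B₂ ∈ 𝓑) : B₁.card = B₂.card :=
  bases_card_eq_aux hM _ B₁ hB₁ B₂ hB₂ rfl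

lemma seg_mem_vertex {n : ℕ} {B B' C : Finset (Fin n)} (hBB' : (B \ B').Nonempty)
    (h : indVec n C ∈ segment ℝ (indVec n B) (indVec n B')) : C = B ∨ C = B' := by
  obtain ⟨a, b, ha, hb, hab, hx⟩ := h
  obtain ⟨k, hk⟩ := hBB'
  have hkB : k ∈ B := (Finset.mem_sdiff.mp hk).1
  have hkB' : k ∉ B' := (Finset.mem_sdiff.mp hk).2
  have hk2 := congrFun hx k
  simp only [Pi.add_apply, Pi.smul_apply, indVec, if_pos hkB, if_neg hkB', smul_eq_mul,
    mul_one, mul_zero, add_zero] at hk2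
  by_cases hkC : k ∈ C
  · rw [if_pos hkC] at hk2
    left
    apply indVec_inj (h := ?_)
    have hb0 : b = 0 := by linarith
    rw [← hx, hk2, hb0, one_smul, zero_smul, add_zero]
  · rw [if_neg hkC] at hk2
    right
    apply indVec_inj (h := ?_)
    have hb1 : b = 1 := by linarith
    rw [← hx, hk2, hb1, one_smul, zero_smul, zero_add]

lemma indVec_eq_sum {n : ℕ} (C : Finset (Fin n)) :
    indVec n C = ∑ k ∈ C, Pi.single k (1 : ℝ) := by
  funext i
  rw [Finset.sum_apply]
  simp only [indVec, Pi.single_apply]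
  rw [Finset.sum_ite_eq]

lemma indVec_mem_polytope {n : ℕ} {𝓑 : Finset (Finset (Fin n))} {C : Finset (Fin n)}
    (hC : C ∈ 𝓑) : indVec n C ∈ polytope 𝓑 :=
  subset_convexHull ℝ _ (Set.mem_image_of_mem _ (Finset.mem_coe.mpr hC))

/-- The segment between two distinct bases `B, B'` of a matroid is an edge of the
matroid polytope iff `|B \ B'| = 1`, i.e. `B' = (B \ {i}) ∪ {j}` for some `i, j`. -/
theorem statement_2 (n : ℕ) (𝓑 : Finset (Finset (Fin n))) (hM : IsBases 𝓑)
    (B B' : Finset (Fin n)) (hB : B ∈ 𝓑) (hB' : B' ∈ 𝓑) (hne : B ≠ B') :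
    IsEdge (polytope 𝓑) (segment ℝ (indVec n B) (indVec n B')) ↔ (B \ B').card = 1 := by
  have hcard : B.card = B'.card := bases_card_eq hM hB hB'
  have hd1 : (B \ B').Nonempty := by
    rw [Finset.sdiff_nonempty]
    intro hsub
    exact hne (Finset.eq_of_subset_of_card_le hsub (le_of_eq hcard.symm))
  have hd2 : (B' \ B).Nonempty := by
    rw [Finset.sdiff_nonempty]
    intro hsub
    exact hne (Finset.eq_of_subset_of_card_le hsub (le_of_eq hcard)).symm
  constructor
  · -- forward direction
    rintro ⟨hExp, -⟩
    obtain ⟨l, hF⟩ := hExp ⟨indVec n B, left_mem_segment ℝ _ _⟩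
    set c : Fin n → ℝ := fun k => l (Pi.single k 1) with hc
    have hlval : ∀ C : Finset (Fin n), l (indVec n C) = ∑ k ∈ C, c k := by
      intro C
      rw [indVec_eq_sum, map_sum]
    have hBF : indVec n B ∈ {x ∈ polytope 𝓑 | ∀ y ∈ polytope 𝓑, l y ≤ l x} := by
      rw [← hF]; exact left_mem_segment ℝ _ _
    have hB'F : indVec n B' ∈ {x ∈ polytope 𝓑 | ∀ y ∈ polytope 𝓑, l y ≤ l x} := by
      rw [← hF]; exact right_mem_segment ℝ _ _
    obtain ⟨b₁, hb₁, hmin₁⟩ := Finset.exists_min_image (B \ B') c hd1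
    obtain ⟨b₂', hb₂', hmin₂⟩ := Finset.exists_min_image (B' \ B) c hd2
    obtain ⟨b₂, hb₂, hC⟩ := hM B hB B' hB' b₁ hb₁
    obtain ⟨b₁', hb₁'', hC'⟩ := hM B' hB' B hB b₂' hb₂'
    have hb₁B : b₁ ∈ B := (Finset.mem_sdiff.mp hb₁).1
    have hb₂B' : b₂ ∈ B' := (Finset.mem_sdiff.mp hb₂).1
    have hb₂B : b₂ ∉ B := (Finset.mem_sdiff.mp hb₂).2
    have hb₂'B' : b₂' ∈ B' := (Finset.mem_sdiff.mp hb₂').1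
    have hb₁'B : b₁' ∈ B := (Finset.mem_sdiff.mp hb₁'').1
    have hsumC : ∑ k ∈ insert b₂ (B.erase b₁), c k = ∑ k ∈ B, c k - c b₁ + c b₂ := by
      rw [Finset.sum_insert (fun h => hb₂B (Finset.mem_of_mem_erase h))]
      have := Finset.sum_erase_add B c hb₁B
      linarith
    have hsumC' : ∑ k ∈ insert b₁' (B'.erase b₂'), c k = ∑ k ∈ B', c k - c b₂' + c b₁' := by
      rw [Finset.sum_insert (fun h => (Finset.mem_sdiff.mp hb₁'').2 (Finset.mem_of_mem_erase h))]
      have := Finset.sum_erase_add B' c hb₂'B'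
      linarith
    have hle1 : l (indVec n (insert b₂ (B.erase b₁))) ≤ l (indVec n B) :=
      hBF.2 _ (indVec_mem_polytope hC)
    have hle2 : l (indVec n (insert b₁' (B'.erase b₂'))) ≤ l (indVec n B') :=
      hB'F.2 _ (indVec_mem_polytope hC')
    rw [hlval, hlval, hsumC] at hle1
    rw [hlval, hlval, hsumC'] at hle2
    have h1 : c b₂ ≤ c b₁ := by linarith
    have h2 : c b₁' ≤ c b₂' := by linarith
    have h3 : c b₁ ≤ c b₁' := hmin₁ _ hb₁''
    have h4 : c b₂' ≤ c b₂ := hmin₂ _ hb₂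
    have heq : c b₂ = c b₁ := by linarith
    have hCmax : l (indVec n (insert b₂ (B.erase b₁))) = l (indVec n B) := by
      rw [hlval, hlval, hsumC, heq]; ring
    have hCseg : indVec n (insert b₂ (B.erase b₁)) ∈
        segment ℝ (indVec n B) (indVec n B') := by
      rw [hF]
      refine ⟨indVec_mem_polytope hC, fun y hy => ?_⟩
      rw [hCmax]; exact hBF.2 y hy
    rcases seg_mem_vertex hd1 hCseg with hCB | hCB'
    · exact absurd (hCB ▸ Finset.mem_insert_self b₂ _) hb₂B
    · have hBd : B \ B' = {b₁} := by
        ext x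
        simp only [Finset.mem_sdiff, Finset.mem_singleton]
        constructor
        · rintro ⟨hxB, hxB'⟩
          by_contra hxb₁
          apply hxB'
          rw [← hCB']
          exact Finset.mem_insert_of_mem (Finset.mem_erase.mpr ⟨hxb₁, hxB⟩)
        · rintro rfl
          exact ⟨hb₁B, (Finset.mem_sdiff.mp hb₁).2⟩
      rw [hBd, Finset.card_singleton]
  · -- backward direction
    intro hcard1
    have hcard1' : (B' \ B).card = 1 := by
      rw [← Finset.card_sdiff_comm hcard]
      exact hcard1
    obtain ⟨i, hi⟩ := Finset.card_eq_one.mp hcard1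
    obtain ⟨j, hj⟩ := Finset.card_eq_one.mp hcard1'
    set w : Fin n → ℝ := fun k =>
      (if k ∈ B ∩ B' then 2 else 0) + (if k ∈ B ∪ B' then 1 else 0) with hw
    set l : (Fin n → ℝ) →L[ℝ] ℝ :=
      ∑ k, w k • ContinuousLinearMap.proj k with hl
    have hlval : ∀ x, l x = ∑ k, w k * x k := by
      intro x
      rw [hl, ContinuousLinearMap.sum_apply]
      simp [ContinuousLinearMap.proj_apply]
    have hlind : ∀ C : Finset (Fin n), l (indVec n C) =
        2 * ((C ∩ (B ∩ B')).card : ℝ) + ((C ∩ (B ∪ B')).card : ℝ) := by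
      intro C
      rw [hlval]
      have hterm : ∀ k, w k * indVec n C k = if k ∈ C then w k else 0 := by
        intro k; simp [indVec, mul_ite]
      simp only [hterm]
      rw [Finset.sum_ite_mem, Finset.univ_inter, hw]
      simp only []
      rw [Finset.sum_add_distrib, Finset.sum_ite_mem, Finset.sum_ite_mem,
        Finset.sum_const, Finset.sum_const]
      push_cast [nsmul_eq_mul]
      ring
    set M : ℝ := 2 * ((B ∩ B').card : ℝ) + (B.card : ℝ) with hMdef
    have hSc : (B ∩ B').card + 1 = B.card := by
      have := Finset.card_sdiff_add_card_inter B B'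
      omega
    have key : ∀ C ∈ 𝓑, l (indVec n C) ≤ M ∧ (l (indVec n C) = M → C = B ∨ C = B') := by
      intro C hC
      have hCr : C.card = B.card := bases_card_eq hM hC hB
      have ha : (C ∩ (B ∩ B')).card ≤ (B ∩ B').card :=
        Finset.card_le_card Finset.inter_subset_right
      have hu : (C ∩ (B ∪ B')).card ≤ C.card :=
        Finset.card_le_card Finset.inter_subset_left
      constructor
      · rw [hlind, hMdef]
        have hnat : 2 * (C ∩ (B ∩ B')).card + (C ∩ (B ∪ B')).card
            ≤ 2 * (B ∩ B').card + B.card := by omega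
        exact_mod_cast hnat
      · intro hEq
        rw [hlind, hMdef] at hEq
        have hnat : 2 * (C ∩ (B ∩ B')).card + (C ∩ (B ∪ B')).card
            = 2 * (B ∩ B').card + B.card := by exact_mod_cast hEq
        have ha' : (C ∩ (B ∩ B')).card = (B ∩ B').card := by omega
        have hu' : (C ∩ (B ∪ B')).card = C.card := by omega
        have hSC : B ∩ B' ⊆ C := by
          have h := Finset.eq_of_subset_of_card_le
            (Finset.inter_subset_right : C ∩ (B ∩ B') ⊆ B ∩ B') (le_of_eq ha'.symm)
          intro x hx; rw [← h] at hx; exact (Finset.mem_inter.mp hx).1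
        have hCU : C ⊆ B ∪ B' := by
          have h := Finset.eq_of_subset_of_card_le
            (Finset.inter_subset_left : C ∩ (B ∪ B') ⊆ C) (le_of_eq hu'.symm)
          intro x hx; rw [← h] at hx; exact (Finset.mem_inter.mp hx).2
        have hdc : (C \ (B ∩ B')).card = 1 := by
          rw [Finset.card_sdiff_of_subset hSC]; omega
        obtain ⟨x, hx⟩ := Finset.card_eq_one.mp hdc
        have hxC : x ∈ C \ (B ∩ B') := hx ▸ Finset.mem_singleton_self x
        have hCx : C = insert x (B ∩ B') := by
          rw [Finset.insert_eq, ← hx, Finset.union_comm]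
          exact (Finset.union_sdiff_of_subset hSC).symm
        have hxU : x ∈ B ∪ B' := hCU (Finset.mem_sdiff.mp hxC).1
        have hxS : x ∉ B ∩ B' := (Finset.mem_sdiff.mp hxC).2
        rcases Finset.mem_union.mp hxU with hxB | hxB'
        · left
          have hxB'n : x ∉ B' := fun h => hxS (Finset.mem_inter.mpr ⟨hxB, h⟩)
          have hxi : x ∈ B \ B' := Finset.mem_sdiff.mpr ⟨hxB, hxB'n⟩
          rw [hi, Finset.mem_singleton] at hxi
          have hBi : B = insert i (B ∩ B') := by
            rw [Finset.insert_eq, ← hi]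
            exact (Finset.sdiff_union_inter B B').symm
          rw [hCx, hxi, ← hBi]
        · right
          have hxBn : x ∉ B := fun h => hxS (Finset.mem_inter.mpr ⟨h, hxB'⟩)
          have hxj : x ∈ B' \ B := Finset.mem_sdiff.mpr ⟨hxB', hxBn⟩
          rw [hj, Finset.mem_singleton] at hxj
          have hBj : B' = insert j (B ∩ B') := by
            rw [Finset.insert_eq, ← hj, Finset.inter_comm B B']
            exact (Finset.sdiff_union_inter B' B).symm
          rw [hCx, hxj, ← hBj]
    have hlB : l (indVec n B) = M := by
      rw [hlind, hMdef]
      have h1 : B ∩ (B ∩ B') = B ∩ B' := by rw [← Finset.inter_assoc, Finset.inter_self]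
      have h2 : B ∩ (B ∪ B') = B := Finset.inter_eq_left.mpr Finset.subset_union_left
      rw [h1, h2]
    have hlB' : l (indVec n B') = M := by
      rw [hlind, hMdef]
      have h1 : B' ∩ (B ∩ B') = B ∩ B' := by
        rw [Finset.inter_comm B B', ← Finset.inter_assoc, Finset.inter_self]
      have h2 : B' ∩ (B ∪ B') = B' := Finset.inter_eq_left.mpr Finset.subset_union_right
      rw [h1, h2]
      congr 1
      exact_mod_cast hcard.symm
    have hPle : ∀ y ∈ polytope 𝓑, l y ≤ M := by
      intro y hy
      have hconv : Convex ℝ {x : Fin n → ℝ | l x ≤ M} :=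
        convex_halfSpace_le (LinearMap.isLinear (l : (Fin n → ℝ) →ₗ[ℝ] ℝ)) M
      have hsub : indVec n '' ↑𝓑 ⊆ {x : Fin n → ℝ | l x ≤ M} := by
        rintro _ ⟨C, hC, rfl⟩
        exact (key C (Finset.mem_coe.mp hC)).1
      exact convexHull_min hsub hconv hy
    constructor
    · -- exposedness
      intro _
      refine ⟨l, ?_⟩
      apply Set.Subset.antisymm
      · intro x hx
        have hxP : x ∈ polytope 𝓑 :=
          (convex_convexHull ℝ _).segment_subset (indVec_mem_polytope hB)
            (indVec_mem_polytope hB') hx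
        refine ⟨hxP, fun y hy => ?_⟩
        have hlx : l x = M := by
          obtain ⟨a, b, ha, hb, hab, rfl⟩ := hx
          rw [map_add, map_smul, map_smul, hlB, hlB', smul_eq_mul, smul_eq_mul,
            ← add_mul, hab, one_mul]
        rw [hlx]
        exact hPle y hy
      · rintro x ⟨hxP, hxmax⟩
        have hlxM : l x = M :=
          le_antisymm (hPle x hxP) (hlB ▸ hxmax _ (indVec_mem_polytope hB))
        set T := 𝓑.image (indVec n) with hT
        have hxT : x ∈ convexHull ℝ (↑T : Set (Fin n → ℝ)) := by
          rw [hT, Finset.coe_image]; exact hxP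
        rw [Finset.convexHull_eq] at hxT
        obtain ⟨t, ht0, ht1, hcm⟩ := hxT
        rw [Finset.centerMass_eq_of_sum_1 _ _ ht1] at hcm
        simp only [id] at hcm
        have hly : ∀ y ∈ T, l y ≤ M ∧ (l y = M → y = indVec n B ∨ y = indVec n B') := by
          intro y hy
          obtain ⟨C, hC, rfl⟩ := Finset.mem_image.mp hy
          exact ⟨(key C hC).1, fun h => ((key C hC).2 h).imp (congrArg _) (congrArg _)⟩
        have hlx2 : l x = ∑ y ∈ T, t y * l y := by
          rw [← hcm, map_sum]
          simp [smul_eq_mul]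
        have hsum0 : ∑ y ∈ T, t y * (M - l y) = 0 := by
          have hrw : ∑ y ∈ T, t y * (M - l y)
              = (∑ y ∈ T, t y) * M - ∑ y ∈ T, t y * l y := by
            rw [Finset.sum_mul, ← Finset.sum_sub_distrib]
            apply Finset.sum_congr rfl
            intros; ring
          rw [hrw, ht1, one_mul, ← hlx2, hlxM]; ring
        have hzero : ∀ y ∈ T, t y * (M - l y) = 0 :=
          (Finset.sum_eq_zero_iff_of_nonneg (fun y hy =>
            mul_nonneg (ht0 y hy) (sub_nonneg.mpr (hly y hy).1))).mp hsum0
        classical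
        set T' := T.filter (fun y => t y ≠ 0) with hT'
        have hsubT' : ∀ y ∈ T', y = indVec n B ∨ y = indVec n B' := by
          intro y hy
          obtain ⟨hyT, hty⟩ := Finset.mem_filter.mp hy
          have hz := hzero y hyT
          have hlyM : l y = M := by
            rcases mul_eq_zero.mp hz with h | h
            · exact absurd h hty
            · linarith
          exact (hly y hyT).2 hlyM
        have ht1' : ∑ y ∈ T', t y = 1 := by
          rw [hT', Finset.sum_filter_ne_zero]; exact ht1
        have hxsum' : ∑ y ∈ T', t y • y = x := by
          rw [hT', ← hcm]
          apply Finset.sum_subset (Finset.filter_subset _ _)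
          intro y hy hny
          have hty : t y = 0 := by
            by_contra h
            exact hny (Finset.mem_filter.mpr ⟨hy, h⟩)
          rw [hty, zero_smul]
        have hxseg : x ∈ convexHull ℝ ({indVec n B, indVec n B'} : Set (Fin n → ℝ)) := by
          rw [← hxsum']
          have hmem := T'.centerMass_mem_convexHull
            (s := ({indVec n B, indVec n B'} : Set (Fin n → ℝ))) (w := t)
            (fun y hy => ht0 y (Finset.mem_filter.mp hy).1)
            (by rw [ht1']; norm_num) (z := id)
            (fun y hy => by rcases hsubT' y hy with h | h <;> simp [h])
          rwa [Finset.centerMass_eq_of_sum_1 _ _ ht1'] at hmem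
        rwa [convexHull_pair] at hxseg
    · -- dimension
      have hne' : indVec n B ≠ indVec n B' := fun h => hne (indVec_inj h)
      show polyDim _ = 1
      unfold polyDim
      rw [← convexHull_pair, affineSpan_convexHull, direction_affineSpan, vectorSpan_pair]
      have hv : indVec n B -ᵥ indVec n B' ≠ 0 := by
        simpa [vsub_eq_sub, sub_eq_zero] using hne'
      exact finrank_span_singleton hv
end

section
/- Every face of a matroid polytope is itself a matroid polytope, i.e., for any face F of Q(M) there is a matroid M' on [n] with Q(M') = F. -/
open Finset
open scoped Pointwise

/-!
A nonempty exposed face of `Q(M)` is the set of maximisers of a linear functional `l`. A convex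
combination of points attains the maximum of `l` only if every point of positive weight does, so
the face is the convex hull of the vertices `e_B` maximising `l`, that is, of the bases of maximal
weight for `w i = l (e i)`. These are the bases of a matroid by symmetric exchange: swapping
`e ∈ B₁` against `f ∈ B₂` in both directions preserves the total weight of the pair, so neither
swapped basis can lose weight.
-/

section ExposedFaces

variable {𝕜 E : Type*} [Field 𝕜] [LinearOrder 𝕜] [IsStrictOrderedRing 𝕜] [TopologicalSpace 𝕜]
  [AddCommGroup E] [TopologicalSpace E] [Module 𝕜 E]

theorem ContinuousLinearMap.toExposed_convexHull (l : StrongDual 𝕜 E) (A : Set E) :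
    l.toExposed (convexHull 𝕜 A) = convexHull 𝕜 (l.toExposed A) := by
  classical
  apply Set.Subset.antisymm
  · rintro x ⟨hx, hxmax⟩
    rw [_root_.convexHull_eq] at hx
    obtain ⟨ι, t, w, z, hw₀, hw₁, hzA, rfl⟩ := hx
    have hlx : l (t.centerMass w z) = ∑ i ∈ t, w i * l (z i) := by
      simp [Finset.centerMass_eq_of_sum_1 _ _ hw₁, map_sum]
    -- a point of positive weight below the maximum would pull the average below it
    have hface : ∀ i ∈ t, w i ≠ 0 → l (z i) = l (t.centerMass w z) := by
      intro i hi hwi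
      refine le_antisymm (hxmax _ (subset_convexHull 𝕜 A (hzA i hi))) (not_lt.1 fun hlt => ?_)
      have : ∑ j ∈ t, w j * l (z j) < ∑ j ∈ t, w j * l (t.centerMass w z) :=
        Finset.sum_lt_sum
          (fun j hj => mul_le_mul_of_nonneg_left (hxmax _ (subset_convexHull 𝕜 A (hzA j hj)))
            (hw₀ j hj))
          ⟨i, hi, mul_lt_mul_of_pos_left hlt (lt_of_le_of_ne (hw₀ i hi) (Ne.symm hwi))⟩
      rw [← Finset.sum_mul, hw₁, one_mul, ← hlx] at this
      exact lt_irrefl _ this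
    rw [← Finset.centerMass_filter_ne_zero]
    refine Finset.centerMass_mem_convexHull _ (fun i hi => hw₀ i (Finset.mem_filter.1 hi).1)
      (by rw [Finset.sum_filter_ne_zero, hw₁]; exact one_pos) fun i hi => ?_
    obtain ⟨hi, hwi⟩ := Finset.mem_filter.1 hi
    refine ⟨hzA i hi, fun a ha => ?_⟩
    rw [hface i hi hwi]
    exact hxmax a (subset_convexHull 𝕜 A ha)
  · refine convexHull_min (fun a ha => ⟨subset_convexHull 𝕜 A ha.1, fun y hy => ?_⟩)
      (ContinuousLinearMap.toExposed.isExposed.convex (convex_convexHull 𝕜 A))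
    exact convexHull_min ha.2 (convex_halfSpace_le l.isLinear _) hy

end ExposedFaces

namespace Matroid

variable {α : Type*} {M : Matroid α} {B₁ B₂ : Set α} {e : α}

theorem IsBase.exists_symm_exchange (hB₁ : M.IsBase B₁) (hB₂ : M.IsBase B₂) (he : e ∈ B₁ \ B₂) :
    ∃ f ∈ B₂ \ B₁, M.IsBase (insert f (B₁ \ {e})) ∧ M.IsBase (insert e (B₂ \ {f})) := by
  have heE : e ∈ M.E := hB₁.subset_ground he.1
  have hC : M.IsCircuit (M.fundCircuit e B₂) := hB₂.fundCircuit_isCircuit heE he.2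
  have hK : M.IsCocircuit (M.E \ M.closure (B₁ \ {e})) :=
    hB₁.compl_closure_sdiff_singleton_isCocircuit he.1
  have heK : e ∈ M.E \ M.closure (B₁ \ {e}) := ⟨heE, hB₁.indep.notMem_closure_sdiff_of_mem he.1⟩
  -- a circuit and a cocircuit never meet in exactly one element
  obtain ⟨f, ⟨hfC, hfE, hfcl⟩, hfe⟩ :=
    (hC.isCocircuit_inter_nontrivial hK ⟨e, M.mem_fundCircuit e B₂, heK⟩).exists_ne e
  have hfB₂ : f ∈ B₂ := ((M.fundCircuit_subset_insert e B₂) hfC).resolve_left hfe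
  have hfB₁ : f ∉ B₁ := fun hfB₁ =>
    hfcl (M.subset_closure _ (Set.sdiff_subset.trans hB₁.subset_ground) ⟨hfB₁, hfe⟩)
  refine ⟨f, ⟨hfB₂, hfB₁⟩, hB₁.exchange_base_of_notMem_closure he.1 hfcl hfE, ?_⟩
  refine hB₂.exchange_isBase_of_indep he.2 ?_
  rw [Set.insert_sdiff_singleton_comm hfe.symm]
  exact (hB₂.indep.mem_fundCircuit_iff (by rwa [hB₂.closure_eq]) he.2).1 hfC

end Matroid

namespace IsBases

variable {n : ℕ} {𝓑 : Finset (Finset (Fin n))}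

def toMatroid (hM : IsBases 𝓑) (h𝓑 : 𝓑.Nonempty) : Matroid (Fin n) :=
  Matroid.ofIsBaseOfFinite Set.finite_univ (fun S => ∃ B ∈ 𝓑, ↑B = S)
    (let ⟨B, hB⟩ := h𝓑; ⟨B, B, hB, rfl⟩)
    (by
      rintro _ _ ⟨B₁, hB₁, rfl⟩ ⟨B₂, hB₂, rfl⟩ a ha
      obtain ⟨b, hb, hexch⟩ := hM B₁ hB₁ B₂ hB₂ a (by simpa using ha)
      exact ⟨b, by simpa using hb, _, hexch, by simp [Finset.coe_erase]⟩)
    fun _ _ => Set.subset_univ _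

theorem isBase_toMatroid_coe (hM : IsBases 𝓑) (h𝓑 : 𝓑.Nonempty) {B : Finset (Fin n)} :
    (hM.toMatroid h𝓑).IsBase ↑B ↔ B ∈ 𝓑 :=
  show (∃ B' ∈ 𝓑, (B' : Set (Fin n)) = B) ↔ _ from
    ⟨fun ⟨_, hB', hcoe⟩ => Finset.coe_injective hcoe ▸ hB', fun hB => ⟨B, hB, rfl⟩⟩

theorem exists_symm_exchange (hM : IsBases 𝓑) {B₁ B₂ : Finset (Fin n)} (hB₁ : B₁ ∈ 𝓑)
    (hB₂ : B₂ ∈ 𝓑) {e : Fin n} (he : e ∈ B₁ \ B₂) :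
    ∃ f ∈ B₂ \ B₁, insert f (B₁.erase e) ∈ 𝓑 ∧ insert e (B₂.erase f) ∈ 𝓑 := by
  have h𝓑 : 𝓑.Nonempty := ⟨B₁, hB₁⟩
  obtain ⟨f, hf, hB₃, hB₄⟩ := Matroid.IsBase.exists_symm_exchange
    ((hM.isBase_toMatroid_coe h𝓑).2 hB₁) ((hM.isBase_toMatroid_coe h𝓑).2 hB₂)
    (e := e) (by simpa using he)
  refine ⟨f, by simpa using hf, (hM.isBase_toMatroid_coe h𝓑).1 ?_,
    (hM.isBase_toMatroid_coe h𝓑).1 ?_⟩ <;> simpa [Finset.coe_erase]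

end IsBases

section MaxWeightBases

variable {α : Type*} {w : α → ℝ} {𝓑 : Finset (Finset α)} {B : Finset α}

noncomputable def maxWeightBases (w : α → ℝ) (𝓑 : Finset (Finset α)) : Finset (Finset α) :=
  𝓑.filter fun B => ∀ B' ∈ 𝓑, ∑ i ∈ B', w i ≤ ∑ i ∈ B, w i

theorem mem_maxWeightBases :
    B ∈ maxWeightBases w 𝓑 ↔ B ∈ 𝓑 ∧ ∀ B' ∈ 𝓑, ∑ i ∈ B', w i ≤ ∑ i ∈ B, w i :=
  Finset.mem_filter

theorem IsBases.maxWeightBases {n : ℕ} {𝓑 : Finset (Finset (Fin n))} (hM : IsBases 𝓑)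
    (w : Fin n → ℝ) : IsBases (maxWeightBases w 𝓑) := by
  intro B₁ hB₁ B₂ hB₂ e he
  rw [mem_maxWeightBases] at hB₁ hB₂
  obtain ⟨f, hf, hB₃, hB₄⟩ := hM.exists_symm_exchange hB₁.1 hB₂.1 he
  rw [Finset.mem_sdiff] at he hf
  have hsum : ∑ i ∈ insert f (B₁.erase e), w i + ∑ i ∈ insert e (B₂.erase f), w i =
      ∑ i ∈ B₁, w i + ∑ i ∈ B₂, w i := by
    rw [Finset.sum_insert fun h => hf.2 (Finset.mem_of_mem_erase h),
      Finset.sum_insert fun h => he.2 (Finset.mem_of_mem_erase h),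
      Finset.sum_erase_eq_sub he.1, Finset.sum_erase_eq_sub hf.1]
    ring
  refine ⟨f, Finset.mem_sdiff.2 hf, mem_maxWeightBases.2 ⟨hB₃, fun B hB => ?_⟩⟩
  linarith [hB₁.2 B hB, hB₂.2 _ hB₄]

end MaxWeightBases

theorem indVec_eq_sum_single (n : ℕ) (B : Finset (Fin n)) :
    indVec n B = ∑ i ∈ B, Pi.single i 1 := by
  ext j
  simp [indVec, Pi.single_apply]

theorem toExposed_image_indVec {n : ℕ} (l : StrongDual ℝ (Fin n → ℝ))
    (𝓑 : Finset (Finset (Fin n))) :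
    l.toExposed (indVec n '' ↑𝓑) =
      indVec n '' ↑(maxWeightBases (fun i => l (Pi.single i 1)) 𝓑) := by
  have hl : ∀ B, l (indVec n B) = ∑ i ∈ B, l (Pi.single i 1) := fun B => by
    rw [indVec_eq_sum_single, map_sum]
  ext x
  constructor
  · rintro ⟨⟨B, hB, rfl⟩, hmax⟩
    refine ⟨B, mem_maxWeightBases.2 ⟨hB, fun B' hB' => ?_⟩, rfl⟩
    simpa only [hl] using hmax _ ⟨B', hB', rfl⟩
  · rintro ⟨B, hB, rfl⟩
    obtain ⟨hB, hmax⟩ := mem_maxWeightBases.1 hB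
    refine ⟨⟨B, hB, rfl⟩, ?_⟩
    rintro _ ⟨B', hB', rfl⟩
    simpa only [hl] using hmax B' hB'

/-- Every face of a matroid polytope is itself a matroid polytope. -/
theorem statement_4 (n : ℕ) (𝓑 : Finset (Finset (Fin n))) (hM : IsBases 𝓑)
    (F : Set (Fin n → ℝ)) (hF : IsExposed ℝ (polytope 𝓑) F) :
    ∃ 𝓑' : Finset (Finset (Fin n)), IsBases 𝓑' ∧ polytope 𝓑' = F := by
  rcases F.eq_empty_or_nonempty with rfl | hne
  · exact ⟨∅, fun B hB => absurd hB (Finset.notMem_empty B), by simp [polytope]⟩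
  obtain ⟨l, rfl⟩ := hF hne
  refine ⟨maxWeightBases (fun i => l (Pi.single i 1)) 𝓑, hM.maxWeightBases _, ?_⟩
  change _ = l.toExposed (polytope 𝓑)
  rw [polytope, polytope, l.toExposed_convexHull, toExposed_image_indVec]
end

section
/- For any convex closed set X ⊆ R^n, the function i_X(M) = 1 if Q(M) ∩ X ≠ ∅ and 0 otherwise is a valuation under matroid subdivisions. -/
/-!
Fix `x`. Since the pieces `Q(M_a)` cover `Q(M)`, and an intersection of pieces is a face of
each of them whose vertices are therefore vertices of `Q(M)`, i.e. indicator vectors of bases,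
`Q(M_A) = Q(M) ∩ ⋂_{a ∈ A} Q(M_a)`. Hence `x ∈ Q(M_A) ∩ X` iff `x ∈ Q(M) ∩ X` and
`A ⊆ S(x) := {a | x ∈ Q(M_a)}`, and `S(x) ≠ ∅` for such `x`; so `∑_A (-1)^|A| 1_{Q(M_A) ∩ X}`
vanishes identically. By Groemer's theorem, an integer combination of indicator functions of
compact convex sets that vanishes identically has `∑ cᵢ [Kᵢ ≠ ∅] = 0`; this is the claim.
Groemer's theorem is proved by induction on the dimension, slicing along the last coordinate:
the slices at height `t` give `∑ cᵢ [t ∈ πKᵢ] = 0` for the projected intervals `πKᵢ`, and in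
dimension one the jump of this function just to the right of `v` is the sum of the `cᵢ` over
the intervals ending at `v`.
-/

open Finset
open scoped Pointwise

/-- A subdivision of a polytope `P` into polytopes `Ps i`: their union is `P`,
their vertices are vertices of `P`, and each pairwise intersection is a proper
(exposed) face of both pieces. -/
def IsSubdivision {n m : ℕ} (P : Set (Fin n → ℝ)) (Ps : Fin m → Set (Fin n → ℝ)) : Prop :=
  (⋃ i, Ps i) = P ∧
  (∀ i, Set.extremePoints ℝ (Ps i) ⊆ Set.extremePoints ℝ P) ∧
  ∀ i j, i ≠ j →
    IsExposed ℝ (Ps i) (Ps i ∩ Ps j) ∧ IsExposed ℝ (Ps j) (Ps i ∩ Ps j) ∧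
    Ps i ∩ Ps j ≠ Ps i ∧ Ps i ∩ Ps j ≠ Ps j

/-- A matroid subdivision of the matroid `𝓑` into the matroids `𝓜 i`. -/
def IsMatroidSubdivision {n m : ℕ} (𝓑 : Finset (Finset (Fin n)))
    (𝓜 : Fin m → Finset (Finset (Fin n))) : Prop :=
  IsBases 𝓑 ∧ (∀ i, IsBases (𝓜 i)) ∧ IsSubdivision (polytope 𝓑) fun i => polytope (𝓜 i)

open Classical in
/-- For `A ⊆ [m]`, the matroid `M_A` whose polytope is `⋂_{a ∈ A} Q(M_a)`:
its bases are the bases of `M` whose indicator vector lies in every `Q(M_a)`, `a ∈ A`.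
For `A = ∅` this is `M` itself. -/
noncomputable def interMatroid {n m : ℕ} (𝓑 : Finset (Finset (Fin n)))
    (𝓜 : Fin m → Finset (Finset (Fin n))) (A : Finset (Fin m)) : Finset (Finset (Fin n)) :=
  𝓑.filter fun B => ∀ a ∈ A, indVec n B ∈ polytope (𝓜 a)

/-- `f` is a valuation under matroid subdivisions:
`∑_{A ⊆ [m]} (-1)^{|A|} f(M_A) = 0` for every matroid subdivision. -/
def IsValuation {n : ℕ} {G : Type*} [AddCommGroup G] (f : Finset (Finset (Fin n)) → G) : Prop :=
  ∀ (m : ℕ) (𝓑 : Finset (Finset (Fin n))) (𝓜 : Fin m → Finset (Finset (Fin n))),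
    IsMatroidSubdivision 𝓑 𝓜 →
    ∑ A : Finset (Fin m), (-1 : ℤ) ^ A.card • f (interMatroid 𝓑 𝓜 A) = 0

open Filter Topology

lemma eventually_mem_Icc_iff_nhdsGT (a b v : ℝ) :
    ∀ᶠ t in 𝓝[>] v, (t ∈ Set.Icc a b ↔ a ≤ v ∧ v < b) := by
  have hlt (x : ℝ) : ∀ᶠ t in 𝓝[>] v, v < x → t < x := by
    by_cases h : v < x
    · filter_upwards [nhdsWithin_le_nhds (eventually_lt_nhds h)] with t ht _ using ht
    · exact .of_forall fun _ h' => absurd h' h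
  filter_upwards [self_mem_nhdsWithin, hlt a, hlt b] with t (hvt : v < t) hta htb
  rw [Set.mem_Icc]
  constructor
  · rintro ⟨hat, htb'⟩
    exact ⟨not_lt.1 fun hva => (hta hva).not_ge hat, hvt.trans_le htb'⟩
  · rintro ⟨hav, hvb⟩
    exact ⟨hav.trans hvt.le, (htb hvb).le⟩

open Classical in
lemma groemer_sum_Icc_eq_zero {ι : Type*} [Fintype ι] (a b : ι → ℝ) (c : ι → ℤ)
    (h : ∀ t, ∑ i, c i * (if t ∈ Set.Icc (a i) (b i) then 1 else 0) = 0) :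
    ∑ i, c i * (if (Set.Icc (a i) (b i)).Nonempty then 1 else 0) = 0 := by
  have hjump (v : ℝ) :
      ∑ i with b i = v, c i * (if (Set.Icc (a i) (b i)).Nonempty then 1 else 0) = 0 := by
    obtain ⟨t, ht⟩ :=
      (eventually_all.2 fun i => eventually_mem_Icc_iff_nhdsGT (a i) (b i) v).exists
    calc _ = ∑ i, (c i * (if v ∈ Set.Icc (a i) (b i) then 1 else 0)
            - c i * (if t ∈ Set.Icc (a i) (b i) then 1 else 0)) := by
          rw [sum_filter]
          refine sum_congr rfl fun i _ => ?_
          simp only [ht i, Set.nonempty_Icc, Set.mem_Icc]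
          split_ifs <;> grind
      _ = 0 := by rw [sum_sub_distrib, h v, h t, sub_zero]
  rw [← sum_fiberwise_of_maps_to (t := univ.image b) fun i _ => mem_image_of_mem b (mem_univ i)]
  exact sum_eq_zero fun v _ => hjump v

lemma exists_eq_Icc_of_isCompact_of_convex {J : Set ℝ} (hcomp : IsCompact J)
    (hconv : Convex ℝ J) : ∃ a b, J = Set.Icc a b := by
  rcases J.eq_empty_or_nonempty with rfl | hne
  · exact ⟨1, 0, (Set.Icc_eq_empty zero_lt_one.not_ge).symm⟩
  · exact ⟨_, _, eq_Icc_of_connected_compact ⟨hne, hconv.isPreconnected⟩ hcomp⟩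

section Slice

variable {n : ℕ}

lemma preimage_snoc_eq_image_init (K : Set (Fin (n + 1) → ℝ)) (t : ℝ) :
    (fun y => Fin.snoc y t) ⁻¹' K = Fin.init '' (K ∩ {x | x (Fin.last n) = t}) := by
  ext y
  constructor
  · intro hy
    exact ⟨Fin.snoc y t, ⟨hy, Fin.snoc_last _ _⟩, Fin.init_snoc _ _⟩
  · rintro ⟨x, ⟨hx, rfl⟩, rfl⟩
    simpa only [Set.mem_preimage, Fin.snoc_init_self] using hx

lemma Convex.preimage_snoc {K : Set (Fin (n + 1) → ℝ)} (hK : Convex ℝ K) (t : ℝ) :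
    Convex ℝ ((fun y => Fin.snoc y t) ⁻¹' K) := by
  rw [preimage_snoc_eq_image_init]
  have hhyperplane : Convex ℝ {x : Fin (n + 1) → ℝ | x (Fin.last n) = t} :=
    convex_hyperplane (LinearMap.proj (R := ℝ) (φ := fun _ => ℝ) (Fin.last n)).isLinear t
  exact (hK.inter hhyperplane).linear_image (LinearMap.funLeft ℝ ℝ Fin.castSucc)

lemma IsCompact.preimage_snoc {K : Set (Fin (n + 1) → ℝ)} (hK : IsCompact K) (t : ℝ) :
    IsCompact ((fun y => Fin.snoc y t) ⁻¹' K) := by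
  rw [preimage_snoc_eq_image_init]
  exact (hK.inter_right (isClosed_eq (continuous_apply _) continuous_const)).image
    (continuous_pi fun _ => continuous_apply _)

lemma preimage_snoc_nonempty_iff (K : Set (Fin (n + 1) → ℝ)) (t : ℝ) :
    ((fun y => Fin.snoc y t) ⁻¹' K).Nonempty ↔ t ∈ (· (Fin.last n)) '' K := by
  rw [preimage_snoc_eq_image_init, Set.image_nonempty]
  rfl

end Slice

open Classical in
theorem groemer_sum_eq_zero {ι : Type*} [Fintype ι] (n : ℕ) (K : ι → Set (Fin n → ℝ))
    (c : ι → ℤ) (hconv : ∀ i, Convex ℝ (K i)) (hcomp : ∀ i, IsCompact (K i))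
    (h : ∀ x, ∑ i, c i * (if x ∈ K i then 1 else 0) = 0) :
    ∑ i, c i * (if (K i).Nonempty then 1 else 0) = 0 := by
  induction n with
  | zero => simpa only [Subsingleton.mem_iff_nonempty] using h 0
  | succ n ih =>
    choose a b hab using fun i => exists_eq_Icc_of_isCompact_of_convex
      ((hcomp i).image (continuous_apply (Fin.last n)))
      ((hconv i).linear_image (LinearMap.proj (Fin.last n)))
    have := groemer_sum_Icc_eq_zero a b c fun t => by
      simpa only [preimage_snoc_nonempty_iff, hab] using
        ih (fun i => _ ⁻¹' K i) (fun i => (hconv i).preimage_snoc t)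
          (fun i => (hcomp i).preimage_snoc t) fun y => h (Fin.snoc y t)
    simpa only [← hab, Set.image_nonempty] using this

open Classical in
lemma sum_neg_one_pow_card_mul_ite_mem_inter_biInter_eq_zero {α ι : Type*} [Fintype ι]
    {Y : Set α} {F : ι → Set α} (hY : Y ⊆ ⋃ i, F i) (x : α) :
    ∑ A : Finset ι, (-1 : ℤ) ^ A.card * (if x ∈ Y ∩ ⋂ i ∈ A, F i then 1 else 0) = 0 := by
  by_cases hx : x ∈ Y
  · have hS : (univ.filter fun i => x ∈ F i).Nonempty := by
      obtain ⟨i, hi⟩ := Set.mem_iUnion.1 (hY hx)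
      exact ⟨i, mem_filter.2 ⟨mem_univ i, hi⟩⟩
    have hmem (A : Finset ι) :
        x ∈ Y ∩ ⋂ i ∈ A, F i ↔ A ∈ (univ.filter fun i => x ∈ F i).powerset := by
      simp [hx, Finset.subset_iff]
    simp only [hmem, mul_ite, mul_one, mul_zero]
    rw [sum_ite_mem, univ_inter, sum_powerset_neg_one_pow_card_of_nonempty hS]
  · simp [hx]

section Subdivision

variable {n m : ℕ}

lemma isCompact_polytope (𝓑 : Finset (Finset (Fin n))) : IsCompact (polytope 𝓑) :=
  (𝓑.finite_toSet.image _).isCompact_convexHull ℝ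

lemma IsSubdivision.isExtreme_biInter {P : Set (Fin n → ℝ)}
    {Ps : Fin m → Set (Fin n → ℝ)} (hsub : IsSubdivision P Ps) {A : Finset (Fin m)} {a₀ : Fin m}
    (ha₀ : a₀ ∈ A) : IsExtreme ℝ (Ps a₀) (⋂ a ∈ A, Ps a) := by
  have hface (a : Fin m) : IsExtreme ℝ (Ps a₀) (Ps a₀ ∩ Ps a) := by
    by_cases h : a = a₀
    · simpa only [h, Set.inter_self] using IsExtreme.refl ℝ (Ps a₀)
    · exact (hsub.2.2 a₀ a (Ne.symm h)).1.isExtreme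
  refine ⟨Set.biInter_subset_of_mem ha₀, fun x₁ h₁ x₂ h₂ x hx hseg => ?_⟩
  simp only [Set.mem_iInter₂] at hx ⊢
  exact fun a ha => ((hface a).2 h₁ h₂ ⟨hx a₀ ha₀, hx a ha⟩ hseg).2

lemma polytope_interMatroid {𝓑 : Finset (Finset (Fin n))}
    {𝓜 : Fin m → Finset (Finset (Fin n))}
    (hsub : IsSubdivision (polytope 𝓑) fun i => polytope (𝓜 i)) (A : Finset (Fin m)) :
    polytope (interMatroid 𝓑 𝓜 A) = polytope 𝓑 ∩ ⋂ a ∈ A, polytope (𝓜 a) := by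
  classical
  refine subset_antisymm (convexHull_min ?_ ((convex_convexHull ℝ _).inter
    (convex_iInter₂ fun a _ => convex_convexHull ℝ _))) ?_
  · rintro _ ⟨B, hB, rfl⟩
    rw [Finset.mem_coe, interMatroid, Finset.mem_filter] at hB
    exact ⟨subset_convexHull ℝ _ ⟨B, hB.1, rfl⟩, Set.mem_iInter₂.2 hB.2⟩
  rcases A.eq_empty_or_nonempty with rfl | ⟨a₀, ha₀⟩
  · simp [interMatroid]
  set F := ⋂ a ∈ A, polytope (𝓜 a)
  have hext : IsExtreme ℝ (polytope (𝓜 a₀)) F := hsub.isExtreme_biInter ha₀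
  have hFcomp : IsCompact F := (isCompact_polytope (𝓜 a₀)).of_isClosed_subset
    (isClosed_biInter fun a _ => (isCompact_polytope _).isClosed) (Set.biInter_subset_of_mem ha₀)
  have hextpts : F.extremePoints ℝ ⊆ indVec n '' ↑(interMatroid 𝓑 𝓜 A) := by
    intro x hx
    obtain ⟨B, hB, rfl⟩ := extremePoints_convexHull_subset
      (hsub.2.1 a₀ (hext.extremePoints_subset_extremePoints hx))
    exact ⟨B, Finset.mem_filter.2 ⟨hB, Set.mem_iInter₂.1 hx.1⟩, rfl⟩
  calc polytope 𝓑 ∩ F ⊆ F := Set.inter_subset_right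
    _ = closure (convexHull ℝ (F.extremePoints ℝ)) :=
        (closure_convexHull_extremePoints hFcomp
          (convex_iInter₂ fun a _ => convex_convexHull ℝ _)).symm
    _ ⊆ closure (polytope (interMatroid 𝓑 𝓜 A)) := closure_mono (convexHull_mono hextpts)
    _ = polytope (interMatroid 𝓑 𝓜 A) := (isCompact_polytope _).isClosed.closure_eq

end Subdivision

open Classical in
/-- For any convex closed `X ⊆ ℝⁿ`, the function `i_X(M) = 1` if `Q(M) ∩ X ≠ ∅`
and `0` otherwise is a valuation under matroid subdivisions. -/
theorem statement_8 (n : ℕ) (X : Set (Fin n → ℝ)) (hconv : Convex ℝ X) (hclosed : IsClosed X) :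
    IsValuation fun 𝓑 : Finset (Finset (Fin n)) =>
      if (polytope 𝓑 ∩ X).Nonempty then (1 : ℤ) else 0 := by
  rintro m 𝓑 𝓜 ⟨-, -, hsub⟩
  simp only [smul_eq_mul]
  refine groemer_sum_eq_zero n (fun A => polytope (interMatroid 𝓑 𝓜 A) ∩ X)
    (fun A => (-1) ^ A.card) (fun A => (convex_convexHull ℝ _).inter hconv)
    (fun A => (isCompact_polytope _).inter_right hclosed) fun x => ?_
  simp only [polytope_interMatroid hsub, Set.inter_right_comm _ _ X]
  convert sum_neg_one_pow_card_mul_ite_mem_inter_biInter_eq_zero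
    (Set.inter_subset_left.trans hsub.1.symm.subset) x
end
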